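/- Regularity for β = 0, singular part: let F : ℝ → ℝ be real analytic with F(0) = 0 and F′(0) = −c for some c > 0, and let B ∈ ℝ. Suppose φ : ℝ → ℝ is continuous, 2π-periodic, with zero mean, and satisfies F(φ(x)) = −(K∗φ)(x) + B for all x ∈ ℝ. Suppose φ has an isolated local maximum or isolated local minimum at a point x̄ (i.e., there is δ > 0 such that either φ(x) < φ(x̄) for all x with 0 < |x − x̄| < δ, or φ(x) > φ(x̄) for all such x), set φ̄ := φ(x̄), and assume φ̄ ≠ 0, F′(φ̄) = 0, and that a ≥ 2 is an integer with the n-th derivative F^{(n)}(φ̄) = 0 for all 2 ≤ n < a and F^{(a)}(φ̄) ≠ 0. Then (i) |φ(x) − φ̄|^a/(x − x̄)² tends to a!·|φ̄|/(2·|F^{(a)}(φ̄)|) as x → x̄ with x ≠ x̄, and (ii) φ is not differentiable at x̄. -/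

import Mathlib

/-!
For mean-zero `φ` the kernel inverts `-d²/dx²`: `(K∗φ)'' = -φ`, so `ψ := F ∘ φ = B - K∗φ` is
`C²` with `ψ'' = φ`. By Taylor's theorem for `F` at `φ̄`, `ψ - ψ(x̄) ~ F⁽ᵃ⁾(φ̄)/a! · (φ - φ̄)^a`,
which has a constant strict sign near `x̄` because `x̄` is an isolated extremum of `φ`. Hence `x̄`
is a local extremum of `ψ`, `ψ'(x̄) = 0`, and `ψ - ψ(x̄) ~ φ̄/2 · (x - x̄)²`. Comparing the two
expansions gives `(φ - φ̄)^a / (x - x̄)² → a! φ̄ / (2 F⁽ᵃ⁾(φ̄)) ≠ 0`. If `φ` were differentiable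
at `x̄`, then `φ'(x̄) = 0` and, as `a ≥ 2`, the same quotient would tend to `0`.
-/

open Real MeasureTheory Filter

/-- The 2π-periodic kernel of `D⁻²`, equal to `(1/(4π))(|x|−π)² − π/12` on `[−π,π]`. -/
noncomputable def Kper (x : ℝ) : ℝ :=
  (1 / (4 * π)) * (|x - 2 * π * ((round (x / (2 * π)) : ℤ) : ℝ)| - π) ^ 2 - π / 12

/-- Periodic convolution with the kernel `Kper`. -/
noncomputable def Kconv (φ : ℝ → ℝ) (x : ℝ) : ℝ :=
  ∫ y in (-π)..π, Kper (x - y) * φ y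

open Set Topology intervalIntegral

theorem Function.Periodic.intervalIntegral_sub_add_eq {f : ℝ → ℝ} {c : ℝ}
    (hf : Function.Periodic f (2 * c)) (x : ℝ) :
    ∫ y in (x - c)..(x + c), f y = ∫ y in (-c)..c, f y := by
  simpa only [show x - c + 2 * c = x + c by ring, show -c + 2 * c = c by ring]
    using hf.intervalIntegral_add_eq (x - c) (-c)

lemma Kper_periodic : Function.Periodic Kper (2 * π) := by
  intro x
  have : (x + 2 * π) / (2 * π) = x / (2 * π) + 1 := by field_simp
  simp only [Kper, this, round_add_one, Int.cast_add, Int.cast_one]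
  ring_nf

lemma Kper_eq_of_abs_le {u : ℝ} (hu : |u| ≤ π) : Kper u = 1 / (4 * π) * (|u| - π) ^ 2 - π / 12 := by
  suffices |u - 2 * π * ((round (u / (2 * π)) : ℤ) : ℝ)| = |u| by rw [Kper, this]
  rcases eq_or_ne u π with rfl | hne
  · -- `round (1 / 2) = 1`, so at `u = π` the shift is `2π`, not `0`
    have : round (π / (2 * π)) = 1 := by
      rw [show π / (2 * π) = 1 / 2 by field_simp]
      norm_num [round_eq]
    rw [this, Int.cast_one, mul_one, show π - 2 * π = -π by ring, abs_neg]
  · have hlt : u < π := lt_of_le_of_ne (le_abs_self u |>.trans hu) hne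
    have : round (u / (2 * π)) = 0 := by
      rw [round_eq_zero_iff, mem_Ico, le_div_iff₀ (by positivity), div_lt_iff₀ (by positivity)]
      constructor <;> linarith [neg_abs_le u]
    rw [this, Int.cast_zero, mul_zero, sub_zero]

theorem hasDerivAt_integral_of_hasDerivAt_bounds {f u v : ℝ → ℝ} {u' v' x : ℝ}
    (hf : Continuous f) (hu : HasDerivAt u u' x) (hv : HasDerivAt v v' x) :
    HasDerivAt (fun x => ∫ y in u x..v x, f y) (f (v x) * v' - f (u x) * u') x := by
  have hP : ∀ t, HasDerivAt (fun t => ∫ y in (0 : ℝ)..t, f y) (f t) t := fun t =>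
    (hf.integral_hasStrictDerivAt 0 t).hasDerivAt
  have hsplit : (fun x => ∫ y in u x..v x, f y)
      = fun x => (∫ y in (0 : ℝ)..v x, f y) - ∫ y in (0 : ℝ)..u x, f y := funext fun x =>
    (integral_interval_sub_left (hf.intervalIntegrable _ _) (hf.intervalIntegrable _ _)).symm
  rw [hsplit]
  exact ((hP (v x)).comp x hv).sub ((hP (u x)).comp x hu)

section QuadraticKernel

variable {φ q q' : ℝ → ℝ} {A B C : ℝ}

theorem integral_quadratic_mul (hφ : Continuous φ) (hq : ∀ u, q u = A * u ^ 2 + B * u + C)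
    (x a b : ℝ) :
    ∫ y in a..b, q (x - y) * φ y = (A * x ^ 2 + B * x + C) * (∫ y in a..b, φ y)
      - (2 * A * x + B) * (∫ y in a..b, y * φ y) + A * ∫ y in a..b, y ^ 2 * φ y := by
  simp only [← intervalIntegral.integral_const_mul]
  rw [← intervalIntegral.integral_sub (by apply Continuous.intervalIntegrable; fun_prop)
      (by apply Continuous.intervalIntegrable; fun_prop),
    ← intervalIntegral.integral_add (by apply Continuous.intervalIntegrable; fun_prop)
      (by apply Continuous.intervalIntegrable; fun_prop)]
  congr 1 with y
  rw [hq]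
  ring

theorem hasDerivAt_integral_quadratic_mul (hφ : Continuous φ)
    (hq : ∀ u, q u = A * u ^ 2 + B * u + C) (hq' : ∀ u, q' u = 2 * A * u + B)
    {u v : ℝ → ℝ} {u' v' x : ℝ} (hu : HasDerivAt u u' x) (hv : HasDerivAt v v' x) :
    HasDerivAt (fun x => ∫ y in u x..v x, q (x - y) * φ y)
      (q (x - v x) * φ (v x) * v' - q (x - u x) * φ (u x) * u'
        + ∫ y in u x..v x, q' (x - y) * φ y) x := by
  have hM : ∀ g : ℝ → ℝ, Continuous g →
      HasDerivAt (fun x => ∫ y in u x..v x, g y) (g (v x) * v' - g (u x) * u') x :=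
    fun _ hg => hasDerivAt_integral_of_hasDerivAt_bounds hg hu hv
  have hP : HasDerivAt (fun x : ℝ => A * x ^ 2 + B * x + C) (2 * A * x + B) x := by
    refine ((((hasDerivAt_pow 2 x).const_mul A).add ((hasDerivAt_id x).const_mul B)).add_const
      C).congr_deriv ?_
    simp only [Nat.cast_ofNat, mul_one]
    ring
  have hL : HasDerivAt (fun x : ℝ => 2 * A * x + B) (2 * A) x := by
    simpa using ((hasDerivAt_id x).const_mul (2 * A)).add_const B
  rw [funext fun x => integral_quadratic_mul hφ hq x (u x) (v x),
    integral_quadratic_mul (A := 0) (B := 2 * A) (C := B) hφ (fun u => by rw [hq']; ring), hq, hq]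
  refine ((hP.mul (hM φ hφ)).sub (hL.mul (hM (fun y => y * φ y) (by fun_prop)))
    |>.add ((hM (fun y => y ^ 2 * φ y) (by fun_prop)).const_mul A)).congr_deriv ?_
  ring

end QuadraticKernel

noncomputable def KconvDeriv (φ : ℝ → ℝ) (x : ℝ) : ℝ :=
  (∫ y in (x - π)..x, (x - y - π) / (2 * π) * φ y) + ∫ y in x..(x + π), (x - y + π) / (2 * π) * φ y

section Kconv

variable {φ : ℝ → ℝ} (hφ : Continuous φ) (hφp : Function.Periodic φ (2 * π))
include hφ hφp

lemma Kconv_eq_split (x : ℝ) :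
    Kconv φ x = (∫ y in (x - π)..x, (1 / (4 * π) * (x - y - π) ^ 2 - π / 12) * φ y) +
      ∫ y in x..(x + π), (1 / (4 * π) * (x - y + π) ^ 2 - π / 12) * φ y := by
  have hper : Function.Periodic (fun y => Kper (x - y) * φ y) (2 * π) := fun y => by
    simp only [← sub_sub, Kper_periodic.sub_eq, hφp y]
  have hleft : EqOn (fun y => Kper (x - y) * φ y)
      (fun y => (1 / (4 * π) * (x - y - π) ^ 2 - π / 12) * φ y) (uIcc (x - π) x) := by
    intro y hy
    rw [uIcc_of_le (by linarith [pi_pos])] at hy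
    have h0 : 0 ≤ x - y := by linarith [hy.2]
    simp only [Kper_eq_of_abs_le (by rw [abs_of_nonneg h0]; linarith [hy.1]), abs_of_nonneg h0]
  have hright : EqOn (fun y => Kper (x - y) * φ y)
      (fun y => (1 / (4 * π) * (x - y + π) ^ 2 - π / 12) * φ y) (uIcc x (x + π)) := by
    intro y hy
    rw [uIcc_of_le (by linarith [pi_pos])] at hy
    have h0 : x - y ≤ 0 := by linarith [hy.1]
    simp only [Kper_eq_of_abs_le (by rw [abs_of_nonpos h0]; linarith [hy.2]), abs_of_nonpos h0]
    ring
  have hcont_left : Continuous fun y => (1 / (4 * π) * (x - y - π) ^ 2 - π / 12) * φ y := by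
    fun_prop
  have hcont_right : Continuous fun y => (1 / (4 * π) * (x - y + π) ^ 2 - π / 12) * φ y := by
    fun_prop
  rw [Kconv, ← hper.intervalIntegral_sub_add_eq x,
    ← integral_add_adjacent_intervals (hcont_left.continuousOn.congr hleft).intervalIntegrable
      (hcont_right.continuousOn.congr hright).intervalIntegrable,
    integral_congr hleft, integral_congr hright]

theorem hasDerivAt_Kconv (x : ℝ) : HasDerivAt (Kconv φ) (KconvDeriv φ x) x := by
  have hleft := hasDerivAt_integral_quadratic_mul hφ
    (q := fun u => 1 / (4 * π) * (u - π) ^ 2 - π / 12) (q' := fun u => (u - π) / (2 * π))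
    (A := 1 / (4 * π)) (B := -1 / 2) (C := π / 6) (fun u => by field_simp; ring)
    (fun u => by field_simp; ring) ((hasDerivAt_id' x).sub_const π) (hasDerivAt_id' x)
  have hright := hasDerivAt_integral_quadratic_mul hφ
    (q := fun u => 1 / (4 * π) * (u + π) ^ 2 - π / 12) (q' := fun u => (u + π) / (2 * π))
    (A := 1 / (4 * π)) (B := 1 / 2) (C := π / 6) (fun u => by field_simp; ring)
    (fun u => by field_simp; ring) (hasDerivAt_id' x) ((hasDerivAt_id' x).add_const π)
  rw [funext (Kconv_eq_split hφ hφp)]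
  refine (hleft.add hright).congr_deriv ?_
  rw [KconvDeriv, ← hφp.sub_eq (x + π), show x + π - 2 * π = x - π by ring]
  field_simp
  ring

theorem hasDerivAt_KconvDeriv (hφ0 : ∫ y in (-π)..π, φ y = 0) (x : ℝ) :
    HasDerivAt (KconvDeriv φ) (-φ x) x := by
  have hleft := hasDerivAt_integral_quadratic_mul hφ
    (q := fun u => (u - π) / (2 * π)) (q' := fun _ => 1 / (2 * π))
    (A := 0) (B := 1 / (2 * π)) (C := -1 / 2) (fun u => by field_simp; ring)
    (fun u => by ring) ((hasDerivAt_id' x).sub_const π) (hasDerivAt_id' x)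
  have hright := hasDerivAt_integral_quadratic_mul hφ
    (q := fun u => (u + π) / (2 * π)) (q' := fun _ => 1 / (2 * π))
    (A := 0) (B := 1 / (2 * π)) (C := 1 / 2) (fun u => by field_simp; ring)
    (fun u => by ring) (hasDerivAt_id' x) ((hasDerivAt_id' x).add_const π)
  have hmean : (∫ y in (x - π)..x, 1 / (2 * π) * φ y) + ∫ y in x..(x + π), 1 / (2 * π) * φ y
      = 0 := by
    rw [integral_add_adjacent_intervals (by apply Continuous.intervalIntegrable; fun_prop)
      (by apply Continuous.intervalIntegrable; fun_prop), intervalIntegral.integral_const_mul,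
      hφp.intervalIntegral_sub_add_eq, hφ0, mul_zero]
  refine (hleft.add hright).congr_deriv ?_
  rw [← hφp.sub_eq (x + π), show x + π - 2 * π = x - π by ring]
  linear_combination hmean - φ x * mul_inv_cancel₀ pi_ne_zero

end Kconv

/-- The witness `s` carries the sign that `g` eventually has along `l`. -/
def EventuallyStrictSign {α : Type*} (l : Filter α) (g : α → ℝ) : Prop :=
  ∃ s ≠ (0 : ℝ), ∀ᶠ x in l, 0 < s * g x

namespace EventuallyStrictSign

variable {α : Type*} {l : Filter α} {g : α → ℝ}

theorem eventually_ne_zero (h : EventuallyStrictSign l g) : ∀ᶠ x in l, g x ≠ 0 := by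
  obtain ⟨s, -, hs⟩ := h
  filter_upwards [hs] with x hx h0
  simp [h0] at hx

theorem congr {g' : α → ℝ} (h : EventuallyStrictSign l g) (hg : g =ᶠ[l] g') :
    EventuallyStrictSign l g' := by
  obtain ⟨s, hs0, hs⟩ := h
  exact ⟨s, hs0, by filter_upwards [hs, hg] with x hx hgx; rwa [← hgx]⟩

theorem pow (h : EventuallyStrictSign l g) (n : ℕ) :
    EventuallyStrictSign l fun x => g x ^ n := by
  obtain ⟨s, hs0, hs⟩ := h
  refine ⟨s ^ n, pow_ne_zero n hs0, ?_⟩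
  filter_upwards [hs] with x hx
  rw [← mul_pow]
  exact pow_pos hx n

theorem mul_of_tendsto {u : α → ℝ} {c : ℝ} (h : EventuallyStrictSign l g)
    (hu : Tendsto u l (𝓝 c)) (hc : c ≠ 0) : EventuallyStrictSign l fun x => u x * g x := by
  obtain ⟨s, hs0, hs⟩ := h
  have hcu : ∀ᶠ x in l, 0 < c * u x :=
    (hu.const_mul c).eventually (lt_mem_nhds (mul_self_pos.mpr hc))
  refine ⟨c * s, mul_ne_zero hc hs0, ?_⟩
  filter_upwards [hs, hcu] with x hx hcx
  linarith [mul_pos hcx hx]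

end EventuallyStrictSign

theorem isLocalExtr_of_eventuallyStrictSign {f : ℝ → ℝ} {x0 : ℝ}
    (h : EventuallyStrictSign (𝓝[≠] x0) fun x => f x - f x0) : IsLocalExtr f x0 := by
  obtain ⟨s, hs0, hs⟩ := h
  rcases hs0.lt_or_gt with hneg | hpos
  · refine IsMaxFilter.isExtr ?_
    rw [IsMaxFilter, ← nhdsNE_sup_pure, eventually_sup, eventually_pure]
    refine ⟨?_, le_rfl⟩
    filter_upwards [hs] with x hx
    linarith [neg_of_mul_pos_right hx hneg.le]
  · refine IsMinFilter.isExtr ?_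
    rw [IsMinFilter, ← nhdsNE_sup_pure, eventually_sup, eventually_pure]
    refine ⟨?_, le_rfl⟩
    filter_upwards [hs] with x hx
    linarith [pos_of_mul_pos_right hx hpos.le]

theorem eventuallyStrictSign_sub_of_isolated {f : ℝ → ℝ} {x0 δ : ℝ} (hδ : 0 < δ)
    (h : (∀ x, 0 < |x - x0| → |x - x0| < δ → f x < f x0) ∨
      (∀ x, 0 < |x - x0| → |x - x0| < δ → f x0 < f x)) :
    EventuallyStrictSign (𝓝[≠] x0) fun x => f x - f x0 := by
  have hball : ∀ᶠ x in 𝓝[≠] x0, 0 < |x - x0| ∧ |x - x0| < δ := by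
    filter_upwards [self_mem_nhdsWithin, nhdsWithin_le_nhds (Metric.ball_mem_nhds x0 hδ)]
      with x hne hx
    exact ⟨abs_pos.mpr (sub_ne_zero.mpr hne), hx⟩
  rcases h with h | h
  · exact ⟨-1, by norm_num, by filter_upwards [hball] with x hx; linarith [h x hx.1 hx.2]⟩
  · exact ⟨1, one_ne_zero, by filter_upwards [hball] with x hx; linarith [h x hx.1 hx.2]⟩

theorem tendsto_sub_div_pow_of_iteratedDeriv_eq_zero {f : ℝ → ℝ} {x0 : ℝ} {n : ℕ}
    (hf : ContDiff ℝ n f) (hn : 0 < n) (hvan : ∀ k, 0 < k → k < n → iteratedDeriv k f x0 = 0) :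
    Tendsto (fun x => (f x - f x0) / (x - x0) ^ n) (𝓝[≠] x0)
      (𝓝 (iteratedDeriv n f x0 / n.factorial)) := by
  have htaylor : ∀ x, taylorWithinEval f n univ x0 x
      = f x0 + iteratedDeriv n f x0 / n.factorial * (x - x0) ^ n := by
    intro x
    rw [taylor_within_apply, Finset.sum_eq_add_of_mem 0 n (by simp) (by simp) hn.ne]
    · simp only [iteratedDerivWithin_univ, smul_eq_mul, iteratedDeriv_zero, Nat.factorial_zero,
        Nat.cast_one, inv_one, pow_zero, mul_one, one_mul]
      ring
    · intro k hk hk0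
      rw [iteratedDerivWithin_univ, hvan k (Nat.pos_of_ne_zero hk0.1)
        (lt_of_le_of_ne (Nat.lt_succ_iff.mp (Finset.mem_range.mp hk)) hk0.2), smul_zero]
  have hrem := Real.taylor_tendsto convex_univ (mem_univ x0) hf.contDiffOn
  rw [nhdsWithin_univ] at hrem
  have hlim := (hrem.mono_left (nhdsWithin_le_nhds (s := {x0}ᶜ))).add_const
    (iteratedDeriv n f x0 / n.factorial)
  rw [zero_add] at hlim
  refine hlim.congr' ?_
  filter_upwards [self_mem_nhdsWithin] with x hx
  have hx0 : (x - x0) ^ n ≠ 0 := pow_ne_zero n (sub_ne_zero.mpr hx)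
  rw [htaylor]
  field_simp
  ring

section SecondDerivative

variable {g g' g'' : ℝ → ℝ} (h' : ∀ x, HasDerivAt g (g' x) x) (h'' : ∀ x, HasDerivAt g' (g'' x) x)
include h' h''

theorem contDiff_two_of_hasDerivAt (hc : Continuous g'') : ContDiff ℝ 2 g := by
  rw [show (2 : WithTop ℕ∞) = 1 + 1 from rfl, contDiff_succ_iff_deriv, contDiff_one_iff_deriv,
    funext fun x => (h' x).deriv, funext fun x => (h'' x).deriv]
  exact ⟨fun x => (h' x).differentiableAt, by simp, fun x => (h'' x).differentiableAt, hc⟩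

theorem iteratedDeriv_two_of_hasDerivAt : iteratedDeriv 2 g = g'' := by
  rw [iteratedDeriv_succ, iteratedDeriv_one, funext fun x => (h' x).deriv,
    funext fun x => (h'' x).deriv]

end SecondDerivative

theorem tendsto_sub_pow_div_sq_of_comp {f G : ℝ → ℝ} {x0 c : ℝ} {a : ℕ}
    (hf : ContinuousAt f x0) (hext : EventuallyStrictSign (𝓝[≠] x0) fun x => f x - f x0)
    (hG : Tendsto (fun t => (G t - G (f x0)) / (t - f x0) ^ a) (𝓝[≠] (f x0)) (𝓝 c))
    (hc : c ≠ 0) (hψ : ContDiff ℝ 2 (G ∘ f)) :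
    Tendsto (fun x => (f x - f x0) ^ a / (x - x0) ^ 2) (𝓝[≠] x0)
      (𝓝 (iteratedDeriv 2 (G ∘ f) x0 / 2 / c)) := by
  have hft : Tendsto f (𝓝[≠] x0) (𝓝[≠] (f x0)) :=
    tendsto_nhdsWithin_of_tendsto_nhds_of_eventually_within _ (hf.mono_left nhdsWithin_le_nhds)
      (hext.eventually_ne_zero.mono fun x hx => sub_ne_zero.mp hx)
  have hQ : Tendsto (fun x => (G (f x) - G (f x0)) / (f x - f x0) ^ a) (𝓝[≠] x0) (𝓝 c) :=
    hG.comp hft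
  have hpow := hext.pow a
  have hψext : EventuallyStrictSign (𝓝[≠] x0) fun x => (G ∘ f) x - (G ∘ f) x0 :=
    (hpow.mul_of_tendsto hQ hc).congr <| by
      filter_upwards [hpow.eventually_ne_zero] with x hx
      exact div_mul_cancel₀ _ hx
  have hψ1 : ∀ k, 0 < k → k < 2 → iteratedDeriv k (G ∘ f) x0 = 0 := by
    intro k hk hk2
    obtain rfl : k = 1 := by omega
    rw [iteratedDeriv_one]
    exact (isLocalExtr_of_eventuallyStrictSign hψext).deriv_eq_zero
  have hT := tendsto_sub_div_pow_of_iteratedDeriv_eq_zero hψ two_pos hψ1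
  rw [Nat.factorial_two, Nat.cast_two] at hT
  refine (hT.div hQ hc).congr' ?_
  filter_upwards [hψext.eventually_ne_zero] with x hx
  exact div_div_div_cancel_left' _ _ hx

theorem tendsto_sub_pow_div_sq_of_hasDerivAt_zero {f : ℝ → ℝ} {x0 : ℝ} {a : ℕ}
    (hf : HasDerivAt f 0 x0) (ha : 2 ≤ a) :
    Tendsto (fun x => (f x - f x0) ^ a / (x - x0) ^ 2) (𝓝[≠] x0) (𝓝 0) := by
  have hslope : Tendsto (fun x => (f x - f x0) / (x - x0)) (𝓝[≠] x0) (𝓝 0) :=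
    (hasDerivAt_iff_tendsto_slope.mp hf).congr (slope_def_field f x0)
  have hlin : Tendsto (fun x => (x - x0) ^ (a - 2)) (𝓝[≠] x0) (𝓝 ((x0 - x0) ^ (a - 2))) :=
    (Continuous.tendsto (by fun_prop) x0).mono_left nhdsWithin_le_nhds
  have hlim := (hslope.pow a).mul hlin
  rw [zero_pow (by omega), zero_mul] at hlim
  refine hlim.congr' ?_
  filter_upwards [self_mem_nhdsWithin] with x hx
  have hx0 : x - x0 ≠ 0 := sub_ne_zero.mpr hx
  obtain ⟨b, rfl⟩ : ∃ b, a = b + 2 := ⟨a - 2, by omega⟩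
  rw [Nat.add_sub_cancel, div_pow, pow_add, pow_add]
  field_simp

theorem regularity_beta_zero_singular_general (F : ℝ → ℝ)
    (hF : ∀ x, AnalyticAt ℝ F x) (B : ℝ)
    (φ : ℝ → ℝ) (hφc : Continuous φ) (hφp : Function.Periodic φ (2 * π))
    (hφ0 : (∫ y in (-π)..π, φ y) = 0)
    (heq : ∀ x, F (φ x) = -(Kconv φ x) + B)
    (x0 : ℝ)
    (hext : ∃ δ > (0 : ℝ),
      (∀ x, 0 < |x - x0| → |x - x0| < δ → φ x < φ x0) ∨
      (∀ x, 0 < |x - x0| → |x - x0| < δ → φ x0 < φ x))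
    (hne : φ x0 ≠ 0) (hcrit : deriv F (φ x0) = 0)
    (a : ℕ) (ha : 2 ≤ a)
    (hvan : ∀ m, 2 ≤ m → m < a → iteratedDeriv m F (φ x0) = 0)
    (hnz : iteratedDeriv a F (φ x0) ≠ 0) :
    Filter.Tendsto (fun x => |φ x - φ x0| ^ a / (x - x0) ^ 2) (nhdsWithin x0 {x0}ᶜ)
        (nhds ((a.factorial : ℝ) * |φ x0| / (2 * |iteratedDeriv a F (φ x0)|))) ∧
      ¬ DifferentiableAt ℝ φ x0 := by
  obtain ⟨δ, hδ, hiso⟩ := hext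
  have hsign := eventuallyStrictSign_sub_of_isolated hδ hiso
  have hψ' : ∀ x, HasDerivAt (F ∘ φ) (-KconvDeriv φ x) x := fun x => by
    rw [show F ∘ φ = fun x => -Kconv φ x + B from funext heq]
    exact (hasDerivAt_Kconv hφc hφp x).neg.add_const B
  have hψ'' : ∀ x, HasDerivAt (fun x => -KconvDeriv φ x) (φ x) x := fun x =>
    (hasDerivAt_KconvDeriv hφc hφp hφ0 x).neg.congr_deriv (neg_neg _)
  have hFvan : ∀ k, 0 < k → k < a → iteratedDeriv k F (φ x0) = 0 := fun k hk hka => by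
    rcases (Nat.one_le_iff_ne_zero.mpr hk.ne').eq_or_lt with rfl | hk2
    · rwa [iteratedDeriv_one]
    · exact hvan k hk2 hka
  have hcoef : iteratedDeriv a F (φ x0) / a.factorial ≠ 0 := div_ne_zero hnz (by positivity)
  have hlim := tendsto_sub_pow_div_sq_of_comp hφc.continuousAt hsign
    (tendsto_sub_div_pow_of_iteratedDeriv_eq_zero (AnalyticOnNhd.contDiff fun x _ => hF x)
      (by omega) hFvan) hcoef (contDiff_two_of_hasDerivAt hψ' hψ'' hφc)
  rw [iteratedDeriv_two_of_hasDerivAt hψ' hψ''] at hlim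
  refine ⟨?_, fun hdiff => ?_⟩
  · convert hlim.abs using 2 with x
    · simp only [abs_div, abs_pow, sq_abs]
    · rw [abs_div, abs_div, abs_div, Nat.abs_cast, abs_two]
      field_simp
  · have hφ' : HasDerivAt φ 0 x0 := by
      simpa [(isLocalExtr_of_eventuallyStrictSign hsign).deriv_eq_zero] using hdiff.hasDerivAt
    exact div_ne_zero (div_ne_zero hne two_ne_zero) hcoef
      (tendsto_nhds_unique hlim (tendsto_sub_pow_div_sq_of_hasDerivAt_zero hφ' ha))

/-- Regularity for `β = 0`, singular part: at an isolated local extremum `x0` with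
critical value `φ(x0) = φ̄ ≠ 0`, `F′(φ̄) = 0`, and `a` the first order `≥ 2` with
`F⁽ᵃ⁾(φ̄) ≠ 0`, the solution is exactly `2/a`-Hölder at `x0` and not differentiable there. -/
theorem regularity_beta_zero_singular (F : ℝ → ℝ) (c : ℝ) (hc : 0 < c)
    (hF : ∀ x, AnalyticAt ℝ F x) (hF0 : F 0 = 0) (hF1 : deriv F 0 = -c) (B : ℝ)
    (φ : ℝ → ℝ) (hφc : Continuous φ) (hφp : Function.Periodic φ (2 * π))
    (hφ0 : (∫ y in (-π)..π, φ y) = 0)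
    (heq : ∀ x, F (φ x) = -(Kconv φ x) + B)
    (x0 : ℝ)
    (hext : ∃ δ > (0 : ℝ),
      (∀ x, 0 < |x - x0| → |x - x0| < δ → φ x < φ x0) ∨
      (∀ x, 0 < |x - x0| → |x - x0| < δ → φ x0 < φ x))
    (hne : φ x0 ≠ 0) (hcrit : deriv F (φ x0) = 0)
    (a : ℕ) (ha : 2 ≤ a)
    (hvan : ∀ m, 2 ≤ m → m < a → iteratedDeriv m F (φ x0) = 0)
    (hnz : iteratedDeriv a F (φ x0) ≠ 0) :
    Filter.Tendsto (fun x => |φ x - φ x0| ^ a / (x - x0) ^ 2) (nhdsWithin x0 {x0}ᶜ)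
        (nhds ((a.factorial : ℝ) * |φ x0| / (2 * |iteratedDeriv a F (φ x0)|))) ∧
      ¬ DifferentiableAt ℝ φ x0 :=
  regularity_beta_zero_singular_general F hF B φ hφc hφp hφ0 heq x0 hext hne hcrit a ha hvan hnz
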